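/- Equivalence of lower scaling conditions for ν and K: the following are equivalent for a non-increasing ν with finite second truncated moment: (A'1) there exist T_1 ∈ (0,∞], c_1 > 0 with c_1 r^{-d} K(r) ≤ ν(r) for r < T_1; (A'3) there exist T_3 ∈ (0,∞], c_3 ∈ (0,1], β_3 ∈ [0,2) with c_3 λ^{d+β_3} ν(λr) ≤ ν(r) for λ ≤ 1, r < T_3. Moreover (A'1) implies (A'3) with T_3 = T_1 and constants depending only on d and c_1, and conversely (A'3) implies (A'1) with T_1 = T_3 and c_1 = c_1(d, c_3, β_3). -/

import Mathlib

open MeasureTheory ENNReal Filter Set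

noncomputable def hfun (d : ℕ) (ν : ℝ → ℝ≥0∞) (r : ℝ) : ℝ≥0∞ :=
  ∫⁻ x : EuclideanSpace ℝ (Fin d), min 1 (ENNReal.ofReal (‖x‖ ^ 2 / r ^ 2)) * ν ‖x‖

noncomputable def Kfun (d : ℕ) (ν : ℝ → ℝ≥0∞) (r : ℝ) : ℝ≥0∞ :=
  (ENNReal.ofReal (r ^ 2))⁻¹ *
    ∫⁻ x in {x : EuclideanSpace ℝ (Fin d) | ‖x‖ < r}, ENNReal.ofReal (‖x‖ ^ 2) * ν ‖x‖

namespace S17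

noncomputable def G (d : ℕ) (ν : ℝ → ℝ≥0∞) (s : ℝ) : ℝ≥0∞ :=
  ∫⁻ x in {x : EuclideanSpace ℝ (Fin d) | ‖x‖ < s}, ENNReal.ofReal (‖x‖ ^ 2) * ν ‖x‖

noncomputable def V (d : ℕ) : ℝ≥0∞ := volume (Metric.ball (0 : EuclideanSpace ℝ (Fin d)) 1)

variable {d : ℕ} (hd : 0 < d) {ν : ℝ → ℝ≥0∞}

lemma nontriv (hd : 0 < d) : Nontrivial (EuclideanSpace ℝ (Fin d)) := by
  have : Nonempty (Fin d) := ⟨⟨0, hd⟩⟩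
  infer_instance

lemma V_pos : 0 < V d := Metric.measure_ball_pos _ _ one_pos

lemma V_ne_top : V d ≠ ⊤ := measure_ball_lt_top.ne

lemma ball_eq (s : ℝ) :
    {x : EuclideanSpace ℝ (Fin d) | ‖x‖ < s} = Metric.ball (0 : EuclideanSpace ℝ (Fin d)) s := by
  ext x; simp [Metric.mem_ball, dist_zero_right]

lemma vol_ball (hd : 0 < d) {s : ℝ} (hs : 0 ≤ s) :
    volume {x : EuclideanSpace ℝ (Fin d) | ‖x‖ < s} = ENNReal.ofReal (s ^ d) * V d := by
  have := nontriv hd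
  rw [ball_eq, Measure.addHaar_ball _ _ hs, finrank_euclideanSpace_fin, V]

lemma fmeas (hν : Measurable ν) :
    Measurable fun x : EuclideanSpace ℝ (Fin d) => ENNReal.ofReal (‖x‖ ^ 2) * ν ‖x‖ :=
  ((measurable_norm.pow_const 2).ennreal_ofReal).mul (hν.comp measurable_norm)

lemma G_mono {s t : ℝ} (hst : s ≤ t) : G d ν s ≤ G d ν t :=
  lintegral_mono_set (fun x hx => lt_of_lt_of_le hx hst)

def shell (d : ℕ) (a b : ℝ) : Set (EuclideanSpace ℝ (Fin d)) :=
  {x | a ≤ ‖x‖ ∧ ‖x‖ < b}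

lemma shell_meas (a b : ℝ) : MeasurableSet (shell d a b) := by
  have h1 : MeasurableSet {x : EuclideanSpace ℝ (Fin d) | a ≤ ‖x‖} :=
    measurableSet_le measurable_const measurable_norm
  have h2 : MeasurableSet {x : EuclideanSpace ℝ (Fin d) | ‖x‖ < b} :=
    measurableSet_lt measurable_norm measurable_const
  exact h1.inter h2

lemma vol_shell (hd : 0 < d) {a b : ℝ} (ha : 0 ≤ a) (hab : a ≤ b) :
    volume (shell d a b) = ENNReal.ofReal (b ^ d - a ^ d) * V d := by
  have hb : 0 ≤ b := le_trans ha hab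
  have hsub : {x : EuclideanSpace ℝ (Fin d) | ‖x‖ < a} ⊆ {x | ‖x‖ < b} :=
    fun x hx => lt_of_lt_of_le hx hab
  have hdiff : shell d a b = {x : EuclideanSpace ℝ (Fin d) | ‖x‖ < b} \ {x | ‖x‖ < a} := by
    ext x; simp [shell, not_lt, and_comm]
  rw [hdiff, measure_diff hsub
    (measurableSet_lt measurable_norm measurable_const).nullMeasurableSet
    (by rw [vol_ball hd ha]; exact mul_ne_top ofReal_ne_top V_ne_top),
    vol_ball hd ha, vol_ball hd hb, ← ENNReal.sub_mul (fun _ _ => V_ne_top),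
    ← ENNReal.ofReal_sub _ (by positivity)]

lemma shell_lower (hd : 0 < d) (hν_mono : AntitoneOn ν (Set.Ici 0)) {a b : ℝ}
    (ha : 0 ≤ a) (hab : a ≤ b) :
    ENNReal.ofReal (a ^ 2) * ν b * (ENNReal.ofReal (b ^ d - a ^ d) * V d) ≤
      ∫⁻ x in shell d a b, ENNReal.ofReal (‖x‖ ^ 2) * ν ‖x‖ := by
  rw [← vol_shell hd ha hab, ← setLIntegral_const]
  refine setLIntegral_mono' (shell_meas a b) (fun x hx => ?_)
  refine mul_le_mul' (ENNReal.ofReal_le_ofReal (by nlinarith [hx.1, hx.2, ha])) ?_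
  exact hν_mono (Set.mem_Ici.mpr (le_trans ha hx.1)) (Set.mem_Ici.mpr (le_trans ha hab))
    hx.2.le

lemma shell_upper (hd : 0 < d) (hν_mono : AntitoneOn ν (Set.Ici 0)) {a b : ℝ}
    (ha : 0 ≤ a) (hab : a ≤ b) :
    (∫⁻ x in shell d a b, ENNReal.ofReal (‖x‖ ^ 2) * ν ‖x‖) ≤
      ENNReal.ofReal (b ^ 2) * ν a * (ENNReal.ofReal (b ^ d) * V d) := by
  calc (∫⁻ x in shell d a b, ENNReal.ofReal (‖x‖ ^ 2) * ν ‖x‖)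
      ≤ ∫⁻ _ in shell d a b, ENNReal.ofReal (b ^ 2) * ν a := by
        refine setLIntegral_mono' (shell_meas a b) (fun x hx => ?_)
        refine mul_le_mul' (ENNReal.ofReal_le_ofReal (by nlinarith [hx.1, hx.2, ha])) ?_
        exact hν_mono (Set.mem_Ici.mpr ha) (Set.mem_Ici.mpr (le_trans ha hx.1)) hx.1
    _ = ENNReal.ofReal (b ^ 2) * ν a * volume (shell d a b) := setLIntegral_const _ _
    _ ≤ ENNReal.ofReal (b ^ 2) * ν a * (ENNReal.ofReal (b ^ d) * V d) := by
        refine mul_le_mul_right ?_ _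
        rw [vol_shell hd ha hab]
        exact mul_le_mul_left (ENNReal.ofReal_le_ofReal (by nlinarith [pow_nonneg ha d])) _

lemma G_ne_top (hν : Measurable ν)
    (hν_int : (∫⁻ x : EuclideanSpace ℝ (Fin d),
      min 1 (ENNReal.ofReal (‖x‖ ^ 2)) * ν ‖x‖) ≠ ⊤) {s : ℝ} : G d ν s ≠ ⊤ := by
  have hb : G d ν s ≤ ENNReal.ofReal (max 1 (s ^ 2)) *
      ∫⁻ x : EuclideanSpace ℝ (Fin d), min 1 (ENNReal.ofReal (‖x‖ ^ 2)) * ν ‖x‖ := by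
    calc G d ν s ≤ ∫⁻ x in {x : EuclideanSpace ℝ (Fin d) | ‖x‖ < s},
        ENNReal.ofReal (max 1 (s ^ 2)) * (min 1 (ENNReal.ofReal (‖x‖ ^ 2)) * ν ‖x‖) := by
          refine setLIntegral_mono' (measurableSet_lt measurable_norm measurable_const)
            (fun x hx => ?_)
          rw [← mul_assoc]
          refine mul_le_mul' ?_ le_rfl
          rcases le_or_gt (‖x‖^2) 1 with h | h
          · rw [min_eq_right (ENNReal.ofReal_le_one.mpr h)]
            calc ENNReal.ofReal (‖x‖ ^ 2) = 1 * ENNReal.ofReal (‖x‖ ^ 2) := (one_mul _).symm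
              _ ≤ _ := mul_le_mul' (by simp [ENNReal.one_le_ofReal]) le_rfl
          · rw [min_eq_left (by exact_mod_cast ENNReal.one_le_ofReal.mpr h.le), mul_one]
            refine ENNReal.ofReal_le_ofReal ?_
            have hx2 : ‖x‖ ^ 2 ≤ s ^ 2 := by
              have := hx.out
              nlinarith [norm_nonneg x]
            exact le_max_of_le_right hx2
      _ ≤ ∫⁻ x : EuclideanSpace ℝ (Fin d),
          ENNReal.ofReal (max 1 (s ^ 2)) * (min 1 (ENNReal.ofReal (‖x‖ ^ 2)) * ν ‖x‖) :=
          setLIntegral_le_lintegral _ _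
      _ = _ := lintegral_const_mul _ ((measurable_const.min
          ((measurable_norm.pow_const 2).ennreal_ofReal)).mul (hν.comp measurable_norm))
  exact ne_top_of_le_ne_top (ENNReal.mul_ne_top ofReal_ne_top hν_int) hb

lemma massage {c1 r : ℝ} (hr : 0 < r) :
    (ENNReal.ofReal c1 * (Kfun d ν r / ENNReal.ofReal (r ^ d)) ≤ ν r) ↔
    ENNReal.ofReal c1 * G d ν r ≤ ENNReal.ofReal (r ^ (d + 2)) * ν r := by
  have hP0 : ENNReal.ofReal (r ^ 2) ≠ 0 := (ENNReal.ofReal_pos.mpr (by positivity)).ne'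
  have hQ0 : ENNReal.ofReal (r ^ d) ≠ 0 := (ENNReal.ofReal_pos.mpr (by positivity)).ne'
  have hPQ : ENNReal.ofReal (r ^ 2) * ENNReal.ofReal (r ^ d) = ENNReal.ofReal (r ^ (d + 2)) := by
    rw [← ENNReal.ofReal_mul (by positivity), ← pow_add, add_comm]
  have hkey : ENNReal.ofReal c1 * (Kfun d ν r / ENNReal.ofReal (r ^ d)) =
      (ENNReal.ofReal (r ^ (d+2)))⁻¹ * (ENNReal.ofReal c1 * G d ν r) := by
    rw [← hPQ, ENNReal.mul_inv (Or.inl hP0) (Or.inr hQ0), Kfun, div_eq_mul_inv]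
    show _ * (_⁻¹ * G d ν r * _⁻¹) = _
    ring
  have h1 : (ENNReal.ofReal (r^(d+2)))⁻¹ * ENNReal.ofReal (r^(d+2)) = 1 :=
    ENNReal.inv_mul_cancel (by rw [← hPQ]; exact mul_ne_zero hP0 hQ0) ofReal_ne_top
  constructor
  · intro h
    calc ENNReal.ofReal c1 * G d ν r
        = ENNReal.ofReal (r^(d+2)) * ((ENNReal.ofReal (r^(d+2)))⁻¹ *
            (ENNReal.ofReal c1 * G d ν r)) := by
          rw [← mul_assoc, mul_comm (ENNReal.ofReal (r^(d+2))), h1, one_mul]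
      _ ≤ _ := mul_le_mul_right (hkey ▸ h) _
  · intro h
    rw [hkey]
    calc (ENNReal.ofReal (r^(d+2)))⁻¹ * (ENNReal.ofReal c1 * G d ν r)
        ≤ (ENNReal.ofReal (r^(d+2)))⁻¹ * (ENNReal.ofReal (r^(d+2)) * ν r) :=
          mul_le_mul_right h _
      _ = ν r := by rw [← mul_assoc, h1, one_mul]

noncomputable def kap (d : ℕ) : ℝ := (2 ^ d - 1) / (4 * 2 ^ d)

lemma kap_pos (hd : 0 < d) : 0 < kap d := by
  have h2 : (2:ℝ)^1 ≤ 2^d := pow_le_pow_right₀ one_le_two hd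
  have : (1:ℝ) < 2^d := by nlinarith
  unfold kap
  exact div_pos (by linarith) (by positivity)

noncomputable def eps (d : ℕ) (c1 : ℝ) : ℝ := min (c1 * kap d * (V d).toReal) 2⁻¹

lemma eps_pos (hd : 0 < d) {c1 : ℝ} (hc1 : 0 < c1) : 0 < eps d c1 := by
  have h1 : 0 < (V d).toReal := ENNReal.toReal_pos (V_pos (d := d)).ne' V_ne_top
  have := kap_pos hd
  simp only [eps, lt_min_iff]
  exact ⟨mul_pos (mul_pos hc1 this) h1, by norm_num⟩

lemma eps_le (d : ℕ) (c1: ℝ) : eps d c1 ≤ 2⁻¹ := min_le_right _ _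

lemma step (hd : 0 < d) (hν_mono : AntitoneOn ν (Set.Ici 0)) {c1 s : ℝ}
    (hc1 : 0 < c1) (hs : 0 < s)
    (hG : G d ν (2 * s) ≠ ⊤)
    (hyp : ENNReal.ofReal c1 * G d ν (2*s) ≤ ENNReal.ofReal ((2*s) ^ (d + 2)) * ν (2*s)) :
    G d ν s ≤ ENNReal.ofReal (1 - eps d c1) * G d ν (2*s) := by
  have hsplit : G d ν (2*s) = G d ν s +
      ∫⁻ x in shell d s (2*s), ENNReal.ofReal (‖x‖ ^ 2) * ν ‖x‖ := by
    have hunion : {x : EuclideanSpace ℝ (Fin d) | ‖x‖ < 2*s} =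
        {x : EuclideanSpace ℝ (Fin d) | ‖x‖ < s} ∪ shell d s (2*s) := by
      ext x
      simp only [mem_setOf_eq, mem_union, shell]
      constructor
      · intro h
        rcases lt_or_ge ‖x‖ s with h' | h'
        · exact Or.inl h'
        · exact Or.inr ⟨h', h⟩
      · rintro (h | ⟨-, h⟩)
        · linarith
        · exact h
    have hdisj : Disjoint {x : EuclideanSpace ℝ (Fin d) | ‖x‖ < s} (shell d s (2*s)) :=
      Set.disjoint_left.mpr (fun x hx hx2 => absurd hx2.1 (not_le.mpr hx))
    rw [G, hunion, lintegral_union (shell_meas _ _) hdisj]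
    rfl
  have hkey : ENNReal.ofReal (eps d c1) * G d ν (2*s) ≤
      ∫⁻ x in shell d s (2*s), ENNReal.ofReal (‖x‖ ^ 2) * ν ‖x‖ := by
    have h1 : ENNReal.ofReal (eps d c1) * G d ν (2*s) ≤
        ENNReal.ofReal (c1 * kap d) * V d * G d ν (2*s) := by
      refine mul_le_mul' ?_ le_rfl
      calc ENNReal.ofReal (eps d c1) ≤ ENNReal.ofReal (c1 * kap d * (V d).toReal) :=
            ENNReal.ofReal_le_ofReal (min_le_left _ _)
        _ = ENNReal.ofReal (c1 * kap d) * ENNReal.ofReal ((V d).toReal) :=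
            ENNReal.ofReal_mul (mul_pos hc1 (kap_pos hd)).le
        _ = ENNReal.ofReal (c1 * kap d) * V d := by rw [ENNReal.ofReal_toReal V_ne_top]
    have h2 : ENNReal.ofReal (c1 * kap d) * G d ν (2*s) ≤
        ENNReal.ofReal (s ^ (d+2) * (2^d - 1)) * ν (2*s) := by
      have := mul_le_mul_right hyp (ENNReal.ofReal (kap d))
      calc ENNReal.ofReal (c1 * kap d) * G d ν (2*s)
          = ENNReal.ofReal (kap d) * (ENNReal.ofReal c1 * G d ν (2*s)) := by
            rw [← mul_assoc, ← ENNReal.ofReal_mul (kap_pos hd).le, mul_comm (kap d) c1]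
        _ ≤ ENNReal.ofReal (kap d) * (ENNReal.ofReal ((2*s) ^ (d + 2)) * ν (2*s)) := this
        _ = ENNReal.ofReal (s ^ (d+2) * (2^d - 1)) * ν (2*s) := by
            rw [← mul_assoc, ← ENNReal.ofReal_mul (kap_pos hd).le]
            congr 2
            have h2d : (2:ℝ)^d ≠ 0 := by positivity
            rw [kap, mul_pow, pow_add]
            field_simp
            ring
    have h3 := shell_lower hd hν_mono hs.le (by linarith) (b := 2*s)
    calc ENNReal.ofReal (eps d c1) * G d ν (2*s)
        ≤ ENNReal.ofReal (c1 * kap d) * V d * G d ν (2*s) := h1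
      _ = ENNReal.ofReal (c1 * kap d) * G d ν (2*s) * V d := by ring
      _ ≤ ENNReal.ofReal (s ^ (d+2) * (2^d - 1)) * ν (2*s) * V d :=
          mul_le_mul' h2 le_rfl
      _ = ENNReal.ofReal (s^2) * ν (2*s) * (ENNReal.ofReal ((2*s)^d - s^d) * V d) := by
          have he : s ^ (d+2) * ((2:ℝ)^d - 1) = s^2 * ((2*s)^d - s^d) := by
            rw [mul_pow, pow_add]; ring
          rw [he, ENNReal.ofReal_mul (by positivity)]
          ring
      _ ≤ _ := h3
  have heq : ENNReal.ofReal (1 - eps d c1) * G d ν (2*s) +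
      ENNReal.ofReal (eps d c1) * G d ν (2*s) = G d ν (2*s) := by
    rw [← add_mul, ← ENNReal.ofReal_add (by
      have := eps_le d c1; linarith) (eps_pos hd hc1).le, sub_add_cancel,
      ENNReal.ofReal_one, one_mul]
  have hmain : G d ν s + ENNReal.ofReal (eps d c1) * G d ν (2*s) ≤ G d ν (2*s) := by
    conv_rhs => rw [hsplit]
    exact add_le_add_right hkey _
  exact (ENNReal.add_le_add_iff_right (ENNReal.mul_ne_top ofReal_ne_top hG)).mp
    (hmain.trans_eq heq.symm)

end S17

namespace S17
variable {d : ℕ} {ν : ℝ → ℝ≥0∞}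

lemma iterate (hd : 0 < d) (hν_meas : Measurable ν) (hν_mono : AntitoneOn ν (Set.Ici 0))
    (hν_int : (∫⁻ x : EuclideanSpace ℝ (Fin d),
      min 1 (ENNReal.ofReal (‖x‖ ^ 2)) * ν ‖x‖) ≠ ⊤)
    {T : ℝ≥0∞} {c1 : ℝ} (hc1 : 0 < c1)
    (hyp : ∀ r : ℝ, 0 < r → ENNReal.ofReal r < T →
      ENNReal.ofReal c1 * G d ν r ≤ ENNReal.ofReal (r ^ (d + 2)) * ν r)
    {r : ℝ} (hr : 0 < r) (hrT : ENNReal.ofReal r < T) (j : ℕ) :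
    G d ν ((2⁻¹:ℝ)^j * r) ≤ ENNReal.ofReal (1 - eps d c1) ^ j * G d ν r := by
  induction j with
  | zero => simp
  | succ n ih =>
    have hpos : (0:ℝ) < (2⁻¹:ℝ)^n * r := by positivity
    have hle : (2⁻¹:ℝ)^n * r ≤ r := by
      nlinarith [pow_le_one₀ (by norm_num : (0:ℝ) ≤ 2⁻¹) (by norm_num : (2⁻¹:ℝ) ≤ 1) (n := n)]
    have h2s : 2 * ((2⁻¹:ℝ)^(n+1) * r) = (2⁻¹:ℝ)^n * r := by
      rw [pow_succ]; ring
    have hstep := step hd hν_mono hc1 (s := (2⁻¹:ℝ)^(n+1) * r) (by positivity)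
      (by rw [h2s]; exact G_ne_top hν_meas hν_int)
      (by rw [h2s]; exact hyp _ hpos (lt_of_le_of_lt (ENNReal.ofReal_le_ofReal hle) hrT))
    rw [h2s] at hstep
    calc G d ν ((2⁻¹:ℝ)^(n+1) * r)
        ≤ ENNReal.ofReal (1 - eps d c1) * G d ν ((2⁻¹:ℝ)^n * r) := hstep
      _ ≤ ENNReal.ofReal (1 - eps d c1) * (ENNReal.ofReal (1 - eps d c1) ^ n * G d ν r) :=
          mul_le_mul_right ih _
      _ = ENNReal.ofReal (1 - eps d c1) ^ (n+1) * G d ν r := by rw [pow_succ]; ring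

lemma part1 (hd : 0 < d) (hν_meas : Measurable ν) (hν_mono : AntitoneOn ν (Set.Ici 0))
    (hν_int : (∫⁻ x : EuclideanSpace ℝ (Fin d),
      min 1 (ENNReal.ofReal (‖x‖ ^ 2)) * ν ‖x‖) ≠ ⊤)
    {T : ℝ≥0∞} {c1 : ℝ} (hc1 : 0 < c1)
    (hyp : ∀ r : ℝ, 0 < r → ENNReal.ofReal r < T →
      ENNReal.ofReal c1 * G d ν r ≤ ENNReal.ofReal (r ^ (d + 2)) * ν r) :
    ∃ c3 β3 : ℝ, 0 < c3 ∧ c3 ≤ 1 ∧ 0 ≤ β3 ∧ β3 < 2 ∧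
      ∀ lam r : ℝ, 0 < lam → lam ≤ 1 → 0 < r → ENNReal.ofReal r < T →
        ENNReal.ofReal (c3 * lam ^ ((d : ℝ) + β3)) * ν (lam * r) ≤ ν r := by
  set ε := eps d c1 with hεdef
  have hεpos : 0 < ε := eps_pos hd hc1
  have hεle : ε ≤ 2⁻¹ := eps_le d c1
  set θ := 1 - ε with hθdef
  have hθpos : 0 < θ := by rw [hθdef]; linarith
  have hθlt : θ < 1 := by rw [hθdef]; linarith
  have hθhalf : (2⁻¹:ℝ) ≤ θ := by rw [hθdef]; linarith
  set δ := Real.logb 2 θ⁻¹ with hδdef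
  have hδpos : 0 < δ := Real.logb_pos one_lt_two (one_lt_inv₀ hθpos |>.mpr hθlt)
  have hδle : δ ≤ 1 := by
    rw [hδdef, Real.logb_le_iff_le_rpow one_lt_two (by positivity)]
    rw [Real.rpow_one]
    calc θ⁻¹ ≤ (2⁻¹:ℝ)⁻¹ := inv_anti₀ (by norm_num) hθhalf
      _ = 2 := by norm_num
  have hθeq : θ = (2:ℝ) ^ (-δ) := by
    rw [hδdef, Real.logb_inv, neg_neg, Real.rpow_logb two_pos (by norm_num) hθpos]
  refine ⟨ε * θ, 2 - δ, mul_pos hεpos hθpos, by nlinarith, by linarith, by linarith,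
    fun lam r hlam hlam1 hr hrT => ?_⟩
  -- choose j
  set j := ⌊Real.logb 2 lam⁻¹⌋₊ with hjdef
  have hlaminv1 : 1 ≤ lam⁻¹ := (one_le_inv₀ hlam).mpr hlam1
  have hlognn : 0 ≤ Real.logb 2 lam⁻¹ := Real.logb_nonneg one_lt_two hlaminv1
  have hj2 : lam ≤ (2⁻¹:ℝ)^j := by
    have h1 : (j:ℝ) ≤ Real.logb 2 lam⁻¹ := Nat.floor_le hlognn
    have h2 : (2:ℝ) ^ (j:ℝ) ≤ lam⁻¹ := by
      calc (2:ℝ) ^ (j:ℝ) ≤ (2:ℝ) ^ Real.logb 2 lam⁻¹ :=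
            Real.rpow_le_rpow_of_exponent_le one_le_two h1
        _ = lam⁻¹ := Real.rpow_logb two_pos (by norm_num) (by positivity)
    have h3 : (2:ℝ) ^ j ≤ lam⁻¹ := by rwa [← Real.rpow_natCast (2:ℝ) j]
    calc lam = (lam⁻¹)⁻¹ := (inv_inv lam).symm
      _ ≤ ((2:ℝ)^j)⁻¹ := inv_anti₀ (by positivity) h3
      _ = (2⁻¹:ℝ)^j := by rw [inv_pow]
  have hj1 : (2⁻¹:ℝ)^(j+1) < lam := by
    have h1 : Real.logb 2 lam⁻¹ < (j:ℝ) + 1 := by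
      have := Nat.lt_floor_add_one (Real.logb 2 lam⁻¹)
      push_cast at this ⊢; linarith
    have h2 : lam⁻¹ < (2:ℝ) ^ ((j:ℝ)+1) :=
      (Real.logb_lt_iff_lt_rpow one_lt_two (by positivity)).mp h1
    have h3 : lam⁻¹ < (2:ℝ) ^ (j+1) := by
      rwa [← Real.rpow_natCast (2:ℝ) (j+1), Nat.cast_add, Nat.cast_one]
    calc (2⁻¹:ℝ)^(j+1) = ((2:ℝ)^(j+1))⁻¹ := by rw [inv_pow]
      _ < (lam⁻¹)⁻¹ := by
          apply inv_strictAnti₀ (by positivity) h3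
      _ = lam := inv_inv lam
  -- geometric bound for G
  have hGlam : G d ν (lam * r) ≤ ENNReal.ofReal θ ^ j * G d ν r := by
    refine le_trans (G_mono ?_) (iterate hd hν_meas hν_mono hν_int hc1 hyp hr hrT j)
    nlinarith [pow_pos (by norm_num : (0:ℝ) < 2⁻¹) j]
  -- shell lower bound at lam * r
  set t := lam * r with htdef
  have ht : 0 < t := mul_pos hlam hr
  have hκ : ENNReal.ofReal (kap d * t^(d+2)) * ν t * V d ≤ G d ν t := by
    have hshell := shell_lower hd hν_mono (a := t/2) (b := t) (by positivity) (by linarith)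
    have hsub : shell d (t/2) t ⊆ {x : EuclideanSpace ℝ (Fin d) | ‖x‖ < t} :=
      fun x hx => hx.2
    refine le_trans ?_ ((lintegral_mono_set hsub).trans le_rfl)
    refine le_trans ?_ hshell
    have heq : kap d * t^(d+2) = (t/2)^2 * (t^d - (t/2)^d) := by
      rw [kap, div_pow, pow_add]
      have h2d : (2:ℝ)^d ≠ 0 := by positivity
      field_simp
      have h12 : ((1:ℝ)/2)^d * 2^d = 1 := by rw [← mul_pow]; norm_num
      linear_combination (t^d*4) * h12
    rw [heq, ENNReal.ofReal_mul (by positivity)]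
    apply le_of_eq; ring
  -- scalar inequality
  have hVpos : 0 < (V d).toReal := ENNReal.toReal_pos (V_pos (d := d)).ne' V_ne_top
  have hθj : (0:ℝ) < θ ^ j := pow_pos hθpos j
  have hkey : θ^(j+1) ≤ lam ^ δ := by
    have h1 : θ^(j+1) = (2:ℝ) ^ (-(δ * ((j:ℝ)+1))) := by
      rw [hθeq, ← Real.rpow_natCast ((2:ℝ)^(-δ)) (j+1), ← Real.rpow_mul two_pos.le]
      congr 1
      push_cast; ring
    have h2 : ((2⁻¹:ℝ)^(j+1) : ℝ) ^ δ = (2:ℝ) ^ (-(δ * ((j:ℝ)+1))) := by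
      rw [← Real.rpow_natCast (2⁻¹:ℝ) (j+1), Real.inv_rpow two_pos.le,
        ← Real.rpow_neg two_pos.le, ← Real.rpow_mul two_pos.le]
      congr 1
      push_cast; ring
    rw [h1, ← h2]
    exact Real.rpow_le_rpow (by positivity) hj1.le hδpos.le
  have hlamsplit : lam ^ ((d:ℝ)+(2-δ)) = lam^d * lam^2 * (lam^δ)⁻¹ := by
    have h1 : lam ^ ((d:ℝ)+(2-δ)) = lam ^ (d:ℝ) * lam ^ (2:ℝ) * lam ^ (-δ) := by
      rw [← Real.rpow_add hlam, ← Real.rpow_add hlam]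
      congr 1; ring
    rw [h1, Real.rpow_natCast, Real.rpow_neg hlam.le,
      show (2:ℝ) = ((2:ℕ):ℝ) by norm_num, Real.rpow_natCast]
  have h0 : θ * (lam^δ)⁻¹ ≤ (θ^j)⁻¹ := by
    calc θ * (lam^δ)⁻¹ ≤ θ * (θ^(j+1))⁻¹ :=
          mul_le_mul_of_nonneg_left (inv_anti₀ (pow_pos hθpos _) hkey) hθpos.le
      _ = (θ^j)⁻¹ := by
          rw [pow_succ, mul_inv, ← mul_assoc, mul_comm θ (θ^j)⁻¹, mul_assoc,
            mul_inv_cancel₀ hθpos.ne', mul_one]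
  have ht2 : t^(d+2) = lam^d * lam^2 * r^(d+2) := by
    rw [htdef, mul_pow, pow_add]
  have hreal2 : θ * lam ^ ((d:ℝ)+(2-δ)) * r^(d+2) ≤ (θ^j)⁻¹ * t^(d+2) := by
    rw [hlamsplit, ht2]
    calc θ * (lam^d * lam^2 * (lam^δ)⁻¹) * r^(d+2)
        = (θ * (lam^δ)⁻¹) * (lam^d * lam^2 * r^(d+2)) := by ring
      _ ≤ (θ^j)⁻¹ * (lam^d * lam^2 * r^(d+2)) :=
          mul_le_mul_of_nonneg_right h0 (by positivity)
  have hreal : r^(d+2) * (ε * θ * lam ^ ((d:ℝ) + (2 - δ))) ≤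
      c1 * ((θ^j)⁻¹ * (kap d * t^(d+2) * (V d).toReal)) := by
    have hA : ε ≤ c1 * kap d * (V d).toReal := min_le_left _ _
    have hpos2 : (0:ℝ) ≤ (θ^j)⁻¹ * t^(d+2) :=
      mul_nonneg (inv_nonneg.mpr (pow_nonneg hθpos.le j)) (pow_nonneg ht.le _)
    calc r^(d+2) * (ε * θ * lam ^ ((d:ℝ)+(2-δ)))
        = ε * (θ * lam ^ ((d:ℝ)+(2-δ)) * r^(d+2)) := by ring
      _ ≤ ε * ((θ^j)⁻¹ * t^(d+2)) := mul_le_mul_of_nonneg_left hreal2 hεpos.le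
      _ ≤ (c1 * kap d * (V d).toReal) * ((θ^j)⁻¹ * t^(d+2)) :=
          mul_le_mul_of_nonneg_right hA hpos2
      _ = c1 * ((θ^j)⁻¹ * (kap d * t^(d+2) * (V d).toReal)) := by ring
  have hA0 : ENNReal.ofReal (r^(d+2)) ≠ 0 := (ENNReal.ofReal_pos.mpr (by positivity)).ne'
  refine (ENNReal.mul_le_mul_iff_right hA0 ofReal_ne_top).mp ?_
  calc ENNReal.ofReal (r^(d+2)) * (ENNReal.ofReal (ε * θ * lam ^ ((d:ℝ)+(2-δ))) * ν t)
      = ENNReal.ofReal (r^(d+2) * (ε * θ * lam ^ ((d:ℝ)+(2-δ)))) * ν t := by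
        rw [ENNReal.ofReal_mul (show (0:ℝ) ≤ r^(d+2) by positivity)]
        ring
    _ ≤ ENNReal.ofReal (c1 * ((θ^j)⁻¹ * (kap d * t^(d+2) * (V d).toReal))) * ν t :=
        mul_le_mul' (ENNReal.ofReal_le_ofReal hreal) le_rfl
    _ = ENNReal.ofReal c1 * ((ENNReal.ofReal θ ^ j)⁻¹ *
          (ENNReal.ofReal (kap d * t^(d+2)) * ν t * V d)) := by
        rw [ENNReal.ofReal_mul hc1.le,
          ENNReal.ofReal_mul (inv_nonneg.mpr (pow_nonneg hθpos.le j)),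
          ENNReal.ofReal_mul (mul_pos (kap_pos hd) (pow_pos ht _)).le,
          ENNReal.ofReal_toReal V_ne_top, ENNReal.ofReal_inv_of_pos hθj,
          ENNReal.ofReal_pow hθpos.le]
        ring
    _ ≤ ENNReal.ofReal c1 * ((ENNReal.ofReal θ ^ j)⁻¹ * G d ν t) :=
        mul_le_mul_right (mul_le_mul_right hκ _) _
    _ ≤ ENNReal.ofReal c1 * G d ν r := by
        refine mul_le_mul_right ?_ _
        exact (ENNReal.inv_mul_le_iff (pow_ne_zero j (ENNReal.ofReal_pos.mpr hθpos).ne')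
          (ENNReal.pow_ne_top ofReal_ne_top)).mpr hGlam
    _ ≤ ENNReal.ofReal (r^(d+2)) * ν r := hyp r hr hrT


lemma part2 (hd : 0 < d) (hν_mono : AntitoneOn ν (Set.Ici 0))
    {T : ℝ≥0∞} {c3 β3 : ℝ} (hc3 : 0 < c3) (hβ0 : 0 ≤ β3) (hβ2 : β3 < 2)
    (hyp : ∀ lam r : ℝ, 0 < lam → lam ≤ 1 → 0 < r → ENNReal.ofReal r < T →
      ENNReal.ofReal (c3 * lam ^ ((d : ℝ) + β3)) * ν (lam * r) ≤ ν r) :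
    ∃ c1 : ℝ, 0 < c1 ∧ ∀ r : ℝ, 0 < r → ENNReal.ofReal r < T →
      ENNReal.ofReal c1 * G d ν r ≤ ENNReal.ofReal (r ^ (d + 2)) * ν r := by
  set q : ℝ := (2:ℝ) ^ (β3 - 2) with hqdef
  have hq0 : 0 < q := Real.rpow_pos_of_pos two_pos _
  have hq1 : q < 1 := Real.rpow_lt_one_of_one_lt_of_neg one_lt_two (by linarith)
  set M : ℝ≥0∞ := (1 - ENNReal.ofReal q)⁻¹ with hMdef
  have hM : M ≠ ⊤ := by
    rw [hMdef, Ne, ENNReal.inv_eq_top, tsub_eq_zero_iff_le]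
    exact fun h => absurd (lt_of_lt_of_le (ENNReal.ofReal_lt_one.mpr hq1) h) (lt_irrefl _)
  set W : ℝ≥0∞ := ENNReal.ofReal (c3⁻¹ * (2:ℝ) ^ ((d:ℝ) + β3)) * M * V d with hWdef
  have hW : W ≠ ⊤ := by
    rw [hWdef]
    exact ENNReal.mul_ne_top (ENNReal.mul_ne_top ofReal_ne_top hM) V_ne_top
  set D : ℝ := W.toReal + 1 with hDdef
  have hD : 0 < D := by
    have := ENNReal.toReal_nonneg (a := W); rw [hDdef]; linarith
  refine ⟨D⁻¹, by positivity, fun r hr hrT => ?_⟩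
  -- covering
  have hcov : {x : EuclideanSpace ℝ (Fin d) | ‖x‖ < r} ⊆
      {(0 : EuclideanSpace ℝ (Fin d))} ∪
        ⋃ j : ℕ, shell d ((2⁻¹:ℝ)^(j+1) * r) ((2⁻¹:ℝ)^j * r) := by
    intro x hx
    rcases eq_or_ne x 0 with h0 | h0
    · exact Or.inl (by simp [h0])
    · right
      have hxpos : 0 < ‖x‖ := norm_pos_iff.mpr h0
      have hex : ∃ n : ℕ, (2⁻¹:ℝ)^(n+1) * r ≤ ‖x‖ := by
        obtain ⟨n, hn⟩ := exists_pow_lt_of_lt_one (div_pos hxpos hr) (by norm_num : (2⁻¹:ℝ) < 1)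
        refine ⟨n, ?_⟩
        have h1 : (2⁻¹:ℝ)^n * r < ‖x‖ := (lt_div_iff₀ hr).mp hn
        have h2 : (2⁻¹:ℝ)^(n+1) ≤ (2⁻¹:ℝ)^n :=
          pow_le_pow_of_le_one (by norm_num) (by norm_num) (by omega)
        nlinarith
      set n := Nat.find hex with hndef
      have hspec : (2⁻¹:ℝ)^(n+1) * r ≤ ‖x‖ := Nat.find_spec hex
      have hupper : ‖x‖ < (2⁻¹:ℝ)^n * r := by
        rcases Nat.eq_zero_or_pos n with h | h
        · rw [h]; simpa using hx
        · have hmin := Nat.find_min hex (show n - 1 < n by omega)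
          have : n - 1 + 1 = n := by omega
          rw [this] at hmin
          linarith [not_le.mp hmin]
      exact mem_iUnion.mpr ⟨n, hspec, hupper⟩
  have hcover : G d ν r ≤
      ∑' j : ℕ, ∫⁻ x in shell d ((2⁻¹:ℝ)^(j+1) * r) ((2⁻¹:ℝ)^j * r),
        ENNReal.ofReal (‖x‖ ^ 2) * ν ‖x‖ := by
    calc G d ν r ≤ ∫⁻ x in ({(0 : EuclideanSpace ℝ (Fin d))} ∪
          ⋃ j : ℕ, shell d ((2⁻¹:ℝ)^(j+1) * r) ((2⁻¹:ℝ)^j * r)),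
          ENNReal.ofReal (‖x‖ ^ 2) * ν ‖x‖ := lintegral_mono_set hcov
      _ ≤ (∫⁻ x in ({(0 : EuclideanSpace ℝ (Fin d))} : Set _),
            ENNReal.ofReal (‖x‖ ^ 2) * ν ‖x‖) +
          ∫⁻ x in (⋃ j : ℕ, shell d ((2⁻¹:ℝ)^(j+1) * r) ((2⁻¹:ℝ)^j * r)),
            ENNReal.ofReal (‖x‖ ^ 2) * ν ‖x‖ := lintegral_union_le _ _ _
      _ ≤ 0 + ∑' j : ℕ, ∫⁻ x in shell d ((2⁻¹:ℝ)^(j+1) * r) ((2⁻¹:ℝ)^j * r),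
            ENNReal.ofReal (‖x‖ ^ 2) * ν ‖x‖ := by
          refine add_le_add ?_ (lintegral_iUnion_le _ _)
          rw [lintegral_singleton]
          simp
      _ = _ := zero_add _
  -- term bound
  have hterm : ∀ j : ℕ,
      (∫⁻ x in shell d ((2⁻¹:ℝ)^(j+1) * r) ((2⁻¹:ℝ)^j * r),
        ENNReal.ofReal (‖x‖ ^ 2) * ν ‖x‖) ≤
      ENNReal.ofReal ((r^(d+2) * (c3⁻¹ * (2:ℝ) ^ ((d:ℝ) + β3))) * q^j) * (V d * ν r) := by
    intro j
    have hlam : (0:ℝ) < (2⁻¹:ℝ)^(j+1) := by positivity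
    have hlam1 : (2⁻¹:ℝ)^(j+1) ≤ 1 := pow_le_one₀ (by norm_num) (by norm_num)
    have hab : (2⁻¹:ℝ)^(j+1) * r ≤ (2⁻¹:ℝ)^j * r := by
      have : (2⁻¹:ℝ)^(j+1) ≤ (2⁻¹:ℝ)^j :=
        pow_le_pow_of_le_one (by norm_num) (by norm_num) (by omega)
      nlinarith
    have hν' : ν ((2⁻¹:ℝ)^(j+1) * r) ≤
        (ENNReal.ofReal (c3 * ((2⁻¹:ℝ)^(j+1)) ^ ((d:ℝ) + β3)))⁻¹ * ν r := by
      have h := hyp ((2⁻¹:ℝ)^(j+1)) r hlam hlam1 hr hrT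
      have hpos : (0:ℝ) < c3 * ((2⁻¹:ℝ)^(j+1)) ^ ((d:ℝ) + β3) :=
        mul_pos hc3 (Real.rpow_pos_of_pos hlam _)
      calc ν ((2⁻¹:ℝ)^(j+1) * r)
          = (ENNReal.ofReal (c3 * ((2⁻¹:ℝ)^(j+1)) ^ ((d:ℝ) + β3)))⁻¹ *
              (ENNReal.ofReal (c3 * ((2⁻¹:ℝ)^(j+1)) ^ ((d:ℝ) + β3)) *
                ν ((2⁻¹:ℝ)^(j+1) * r)) := by
            rw [← mul_assoc, ENNReal.inv_mul_cancel (ENNReal.ofReal_pos.mpr hpos).ne'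
              ofReal_ne_top, one_mul]
        _ ≤ _ := mul_le_mul_right h _
    have hup := shell_upper hd hν_mono (a := (2⁻¹:ℝ)^(j+1) * r) (b := (2⁻¹:ℝ)^j * r)
      (by positivity) hab
    have htj : ((2⁻¹:ℝ)^j * r)^2 * ((2⁻¹:ℝ)^j * r)^d *
        (c3 * ((2⁻¹:ℝ)^(j+1)) ^ ((d:ℝ) + β3))⁻¹ =
        (r^(d+2) * (c3⁻¹ * (2:ℝ) ^ ((d:ℝ) + β3))) * q^j := by
      have e1 : ((2⁻¹:ℝ)^j : ℝ) = (2:ℝ) ^ (-(j:ℝ)) := by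
        rw [← Real.rpow_natCast (2⁻¹:ℝ) j, Real.inv_rpow two_pos.le,
          ← Real.rpow_neg two_pos.le]
      have e2 : ((2⁻¹:ℝ)^(j+1) : ℝ) = (2:ℝ) ^ (-((j:ℝ)+1)) := by
        rw [← Real.rpow_natCast (2⁻¹:ℝ) (j+1), Real.inv_rpow two_pos.le,
          ← Real.rpow_neg two_pos.le]
        push_cast; ring_nf
      have e3 : (((2:ℝ) ^ (-((j:ℝ)+1))) : ℝ) ^ ((d:ℝ) + β3) =
          (2:ℝ) ^ (-((j:ℝ)+1) * ((d:ℝ) + β3)) := by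
        rw [← Real.rpow_mul two_pos.le]
      have e4 : (((2:ℝ) ^ (-(j:ℝ))) : ℝ) ^ (d+2 : ℕ) =
          (2:ℝ) ^ (-(j:ℝ) * ((d:ℝ)+2)) := by
        rw [← Real.rpow_natCast ((2:ℝ) ^ (-(j:ℝ))) (d+2), ← Real.rpow_mul two_pos.le]
        push_cast; ring_nf
      have e5 : (q : ℝ)^j = (2:ℝ) ^ ((β3 - 2) * (j:ℝ)) := by
        rw [hqdef, ← Real.rpow_natCast ((2:ℝ) ^ (β3-2)) j, ← Real.rpow_mul two_pos.le]
      calc ((2⁻¹:ℝ)^j * r)^2 * ((2⁻¹:ℝ)^j * r)^d *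
            (c3 * ((2⁻¹:ℝ)^(j+1)) ^ ((d:ℝ) + β3))⁻¹
          = ((2⁻¹:ℝ)^j)^(d+2) * r^(d+2) * (c3⁻¹ * (((2⁻¹:ℝ)^(j+1)) ^ ((d:ℝ) + β3))⁻¹) := by
            rw [mul_inv, pow_add, mul_pow, mul_pow]; ring
        _ = (2:ℝ) ^ (-(j:ℝ) * ((d:ℝ)+2)) * r^(d+2) *
              (c3⁻¹ * (2:ℝ) ^ (((j:ℝ)+1) * ((d:ℝ) + β3))) := by
            rw [e1, e2, e3, e4]
            congr 2
            rw [← Real.rpow_neg two_pos.le]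
            congr 1
            ring
        _ = (r^(d+2) * (c3⁻¹ * (2:ℝ) ^ ((d:ℝ) + β3))) * q^j := by
            rw [e5]
            have emerge1 : (2:ℝ) ^ (-(j:ℝ) * ((d:ℝ)+2)) * (2:ℝ) ^ (((j:ℝ)+1) * ((d:ℝ)+β3)) =
                (2:ℝ) ^ ((d:ℝ)+β3) * (2:ℝ) ^ ((β3-2) * (j:ℝ)) := by
              rw [← Real.rpow_add two_pos, ← Real.rpow_add two_pos]
              congr 1; ring
            linear_combination (r^(d+2) * c3⁻¹) * emerge1
    calc (∫⁻ x in shell d ((2⁻¹:ℝ)^(j+1) * r) ((2⁻¹:ℝ)^j * r),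
          ENNReal.ofReal (‖x‖ ^ 2) * ν ‖x‖)
        ≤ ENNReal.ofReal (((2⁻¹:ℝ)^j * r) ^ 2) * ν ((2⁻¹:ℝ)^(j+1) * r) *
            (ENNReal.ofReal (((2⁻¹:ℝ)^j * r) ^ d) * V d) := hup
      _ ≤ ENNReal.ofReal (((2⁻¹:ℝ)^j * r) ^ 2) *
            ((ENNReal.ofReal (c3 * ((2⁻¹:ℝ)^(j+1)) ^ ((d:ℝ) + β3)))⁻¹ * ν r) *
            (ENNReal.ofReal (((2⁻¹:ℝ)^j * r) ^ d) * V d) :=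
          mul_le_mul' (mul_le_mul_right hν' _) le_rfl
      _ = ENNReal.ofReal (((2⁻¹:ℝ)^j * r)^2 * ((2⁻¹:ℝ)^j * r)^d *
            (c3 * ((2⁻¹:ℝ)^(j+1)) ^ ((d:ℝ) + β3))⁻¹) * (V d * ν r) := by
          have hpos : (0:ℝ) < c3 * ((2⁻¹:ℝ)^(j+1)) ^ ((d:ℝ) + β3) :=
            mul_pos hc3 (Real.rpow_pos_of_pos hlam _)
          rw [ENNReal.ofReal_mul (show (0:ℝ) ≤ ((2⁻¹:ℝ)^j * r)^2 * ((2⁻¹:ℝ)^j * r)^d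
              by positivity),
            ENNReal.ofReal_mul (show (0:ℝ) ≤ ((2⁻¹:ℝ)^j * r)^2 by positivity),
            ENNReal.ofReal_inv_of_pos hpos]
          ring
      _ = _ := by rw [htj]
  -- sum up
  have hsum : G d ν r ≤ ENNReal.ofReal (r^(d+2)) * W * ν r := by
    calc G d ν r ≤ ∑' j : ℕ, ∫⁻ x in shell d ((2⁻¹:ℝ)^(j+1) * r) ((2⁻¹:ℝ)^j * r),
          ENNReal.ofReal (‖x‖ ^ 2) * ν ‖x‖ := hcover
      _ ≤ ∑' j : ℕ, ENNReal.ofReal ((r^(d+2) * (c3⁻¹ * (2:ℝ) ^ ((d:ℝ) + β3))) * q^j) *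
            (V d * ν r) := ENNReal.tsum_le_tsum hterm
      _ = (∑' j : ℕ, ENNReal.ofReal (r^(d+2) * (c3⁻¹ * (2:ℝ) ^ ((d:ℝ) + β3))) *
            ENNReal.ofReal q ^ j) * (V d * ν r) := by
          rw [ENNReal.tsum_mul_right]
          congr 1
          refine tsum_congr (fun j => ?_)
          rw [← ENNReal.ofReal_pow hq0.le, ← ENNReal.ofReal_mul (by positivity)]
      _ = ENNReal.ofReal (r^(d+2) * (c3⁻¹ * (2:ℝ) ^ ((d:ℝ) + β3))) * M * (V d * ν r) := by
          rw [ENNReal.tsum_mul_left, ENNReal.tsum_geometric]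
      _ = ENNReal.ofReal (r^(d+2)) * W * ν r := by
          rw [hWdef, ENNReal.ofReal_mul (by positivity)]
          ring
  calc ENNReal.ofReal D⁻¹ * G d ν r
      ≤ ENNReal.ofReal D⁻¹ * (ENNReal.ofReal (r^(d+2)) * W * ν r) := mul_le_mul_right hsum _
    _ = (ENNReal.ofReal D⁻¹ * W) * (ENNReal.ofReal (r^(d+2)) * ν r) := by ring
    _ ≤ 1 * (ENNReal.ofReal (r^(d+2)) * ν r) := by
        refine mul_le_mul' ?_ le_rfl
        calc ENNReal.ofReal D⁻¹ * W = ENNReal.ofReal D⁻¹ * ENNReal.ofReal W.toReal := by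
              rw [ENNReal.ofReal_toReal hW]
          _ ≤ ENNReal.ofReal D⁻¹ * ENNReal.ofReal D :=
              mul_le_mul_right (ENNReal.ofReal_le_ofReal (by rw [hDdef]; linarith)) _
          _ = 1 := by
              rw [← ENNReal.ofReal_mul (by positivity), inv_mul_cancel₀ hD.ne',
                ENNReal.ofReal_one]
    _ = ENNReal.ofReal (r^(d+2)) * ν r := one_mul _

end S17

theorem stmt17 (d : ℕ) (hd : 0 < d) (ν : ℝ → ℝ≥0∞)
    (hν_meas : Measurable ν) (hν_mono : AntitoneOn ν (Set.Ici 0))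
    (hν_int : (∫⁻ x : EuclideanSpace ℝ (Fin d),
      min 1 (ENNReal.ofReal (‖x‖ ^ 2)) * ν ‖x‖) ≠ ⊤)
 :
    (∀ T : ℝ≥0∞, 0 < T → ∀ c1 : ℝ, 0 < c1 →
      (∀ r : ℝ, 0 < r → ENNReal.ofReal r < T →
        ENNReal.ofReal c1 * (Kfun d ν r / ENNReal.ofReal (r ^ d)) ≤ ν r) →
      ∃ c3 β3 : ℝ, 0 < c3 ∧ c3 ≤ 1 ∧ 0 ≤ β3 ∧ β3 < 2 ∧
        ∀ lam r : ℝ, 0 < lam → lam ≤ 1 → 0 < r → ENNReal.ofReal r < T →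
          ENNReal.ofReal (c3 * lam ^ ((d : ℝ) + β3)) * ν (lam * r) ≤ ν r) ∧
    (∀ T : ℝ≥0∞, 0 < T → ∀ c3 β3 : ℝ, 0 < c3 → c3 ≤ 1 → 0 ≤ β3 → β3 < 2 →
      (∀ lam r : ℝ, 0 < lam → lam ≤ 1 → 0 < r → ENNReal.ofReal r < T →
        ENNReal.ofReal (c3 * lam ^ ((d : ℝ) + β3)) * ν (lam * r) ≤ ν r) →
      ∃ c1 : ℝ, 0 < c1 ∧
        ∀ r : ℝ, 0 < r → ENNReal.ofReal r < T →
          ENNReal.ofReal c1 * (Kfun d ν r / ENNReal.ofReal (r ^ d)) ≤ ν r) := by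
  constructor
  · intro T _hT c1 hc1 hyp
    exact S17.part1 hd hν_meas hν_mono hν_int hc1
      (fun r hr hrT => (S17.massage hr).mp (hyp r hr hrT))
  · intro T _hT c3 β3 hc3 _hc3' hβ0 hβ2 hyp
    obtain ⟨c1, hc1, h⟩ := S17.part2 hd hν_mono hc3 hβ0 hβ2 hyp
    exact ⟨c1, hc1, fun r hr hrT => (S17.massage hr).mpr (h r hr hrT)⟩
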